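/- Let L be a first-order language with finitely many symbols, all of them relation symbols, let A and B be finite L-structures, and let S be a set of relation symbols of L. Then the following are equivalent: (1) there exists an L-homomorphism from B to A, and for every n, every n-ary relation symbol R in S, and every tuple b : Fin n → B not in the interpretation of R in B, there exists an L-homomorphism f : B → A with f ∘ b not in the interpretation of R in A; (2) every S-restricted universal Horn sentence that is true in A is true in B. -/

import Mathlib

/-! Homomorphisms preserve atomic formulas, so a Horn sentence true in `A` can fail in `B` only at
an assignment whose head no homomorphism `B → A` keeps false; this gives (1) ⇒ (2). Conversely,
use the elements of `B` as variables and take its positive atomic diagram as premises: the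
assignments in `A` satisfying them are exactly the homomorphisms `B → A`. With no head, or with
head `R b` for `R ∈ S` and `b` outside `R` in `B`, this sentence fails in `B` at the identity
assignment, so by (2) it fails in `A`, and the failing assignment is the homomorphism that (1)
asks for. -/

open FirstOrder

universe u v

/-- An atomic formula in `n` variables: either an equality between two variables or a
relation symbol applied to variables. -/
inductive HornAtomic (L : FirstOrder.Language.{u, v}) (n : ℕ) : Type v
  | eq (i j : Fin n) : HornAtomic L n
  | rel {m : ℕ} (R : L.Relations m) (t : Fin m → Fin n) : HornAtomic L n

def HornAtomic.Realize {L : FirstOrder.Language.{u, v}} {n : ℕ} {M : Type*}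
    [L.Structure M] (w : Fin n → M) : HornAtomic L n → Prop
  | .eq i j => w i = w j
  | .rel R t => Language.Structure.RelMap R (fun k => w (t k))

/-- A universal Horn sentence: the universal closure (over `n` variables) of a Horn clause,
presented as a finite list of negated atomic disjuncts (the premises) together with an
optional non-negated atomic disjunct (the head). -/
structure HornSentence (L : FirstOrder.Language.{u, v}) : Type v where
  n : ℕ
  premises : List (HornAtomic L n)
  head : Option (HornAtomic L n)

/-- Truth of a universal Horn sentence in a structure `M`. -/
def HornSentence.Realize {L : FirstOrder.Language.{u, v}} (φ : HornSentence L)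
    (M : Type*) [L.Structure M] : Prop :=
  ∀ w : Fin φ.n → M, (∀ ψ ∈ φ.premises, ψ.Realize w) →
    (match φ.head with
      | some ψ => ψ.Realize w
      | none => False)

/-- A universal Horn sentence is `S`-restricted if its non-negated disjunct, when present,
is a relational atomic formula whose relation symbol belongs to `S`. -/
def HornSentence.Restricted {L : FirstOrder.Language.{u, v}}
    (S : ∀ m, Set (L.Relations m)) (φ : HornSentence L) : Prop :=
  match φ.head with
  | none => True
  | some (.eq _ _) => False
  | some (.rel R _) => R ∈ S _

namespace HornAtomic

variable {L : FirstOrder.Language.{u, v}} {n : ℕ} {A B : Type*} [L.Structure A] [L.Structure B]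

theorem realize_comp (f : B →[L] A) {ψ : HornAtomic L n} {w : Fin n → B} (h : ψ.Realize w) :
    ψ.Realize (f ∘ w) := by
  cases ψ with
  | eq i j => exact congrArg f h
  | rel R t => exact f.map_rel R _ h

end HornAtomic

def FirstOrder.Language.Hom.ofMapRel {L : FirstOrder.Language.{u, v}} [L.IsRelational]
    {A B : Type*} [L.Structure A] [L.Structure B] (g : B → A)
    (h : ∀ (m : ℕ) (R : L.Relations m) (x : Fin m → B),
      Language.Structure.RelMap R x → Language.Structure.RelMap R (g ∘ x)) : B →[L] A where
  toFun := g
  map_fun' f := isEmptyElim f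
  map_rel' R x := h _ R x

namespace HornSentence

variable {L : FirstOrder.Language.{u, v}} {A B : Type*} [L.Structure A] [L.Structure B]

def RealizeHead (φ : HornSentence L) {M : Type*} [L.Structure M] (w : Fin φ.n → M) : Prop :=
  match φ.head with
  | some ψ => ψ.Realize w
  | none => False

theorem realize_iff (φ : HornSentence L) (M : Type*) [L.Structure M] :
    φ.Realize M ↔ ∀ w : Fin φ.n → M, (∀ ψ ∈ φ.premises, ψ.Realize w) → φ.RealizeHead w :=
  Iff.rfl

theorem realize_of_exists_hom {φ : HornSentence L}
    (h : ∀ w : Fin φ.n → B, ¬ φ.RealizeHead w → ∃ f : B →[L] A, ¬ φ.RealizeHead (f ∘ w))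
    (hA : φ.Realize A) : φ.Realize B := by
  intro w hw
  by_contra hwB
  obtain ⟨f, hf⟩ := h w hwB
  exact hf (hA _ fun ψ hψ => HornAtomic.realize_comp f (hw ψ hψ))

section Diagram

variable [Finite (Σ m, L.Relations m)] [Finite B] {k : ℕ}

/-- The positive atomic diagram of `B`, the element `b` being named by the variable `e b`. -/
noncomputable def atomicDiagram (e : B ≃ Fin k) : List (HornAtomic L k) :=
  (Set.toFinite {t : Σ p : Σ m, L.Relations m, Fin p.1 → B |
      Language.Structure.RelMap t.1.2 t.2}).toFinset.toList.map
    fun t => .rel t.1.2 (e ∘ t.2)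

theorem forall_realize_atomicDiagram_iff (e : B ≃ Fin k) (w : Fin k → A) :
    (∀ ψ ∈ atomicDiagram (L := L) e, ψ.Realize w) ↔ ∀ (m : ℕ) (R : L.Relations m) (x : Fin m → B),
      Language.Structure.RelMap R x → Language.Structure.RelMap R (w ∘ e ∘ x) := by
  simp only [atomicDiagram, List.mem_map, Finset.mem_toList, Set.Finite.mem_toFinset]
  constructor
  · intro h m R x hx
    exact h _ ⟨⟨⟨m, R⟩, x⟩, hx, rfl⟩
  · rintro h _ ⟨⟨⟨m, R⟩, x⟩, hx, rfl⟩
    exact h m R x hx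

noncomputable def diagramSentence (e : B ≃ Fin k) (head : Option (HornAtomic L k)) :
    HornSentence L :=
  ⟨k, atomicDiagram e, head⟩

theorem not_realize_diagramSentence_self (e : B ≃ Fin k) (head : Option (HornAtomic L k))
    (h : ¬ (diagramSentence e head).RealizeHead e.symm) : ¬ (diagramSentence e head).Realize B :=
  fun hB => h <| hB _ <| (forall_realize_atomicDiagram_iff e e.symm).2 fun m R x hx => by
    simpa [Function.comp_def] using hx

theorem exists_hom_of_not_realize_diagramSentence [L.IsRelational] (e : B ≃ Fin k)
    (head : Option (HornAtomic L k)) (h : ¬ (diagramSentence e head).Realize A) :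
    ∃ f : B →[L] A, ¬ (diagramSentence e head).RealizeHead (f ∘ e.symm) := by
  obtain ⟨w, hw, hwh⟩ : ∃ w : Fin k → A, (∀ ψ ∈ atomicDiagram e, ψ.Realize w) ∧
      ¬ (diagramSentence e head).RealizeHead w := by
    simp only [realize_iff, not_forall, exists_prop] at h
    exact h
  let f : B →[L] A := .ofMapRel (w ∘ e) ((forall_realize_atomicDiagram_iff e w).1 hw)
  have hf : f ∘ e.symm = w := funext fun i => congrArg w (e.apply_symm_apply i)
  exact ⟨f, hf ▸ hwh⟩

end Diagram

end HornSentence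

theorem stmt_1 {L : FirstOrder.Language.{u, v}} (hfun : ∀ n, IsEmpty (L.Functions n))
    (hrel : Finite (Σ n, L.Relations n))
    {A B : Type*} [L.Structure A] [L.Structure B] [Finite B]
    (S : ∀ m, Set (L.Relations m)) :
    ((Nonempty (B →[L] A)) ∧
      ∀ (n : ℕ) (R : L.Relations n), R ∈ S n → ∀ b : Fin n → B,
        ¬ Language.Structure.RelMap R b →
          ∃ f : B →[L] A, ¬ Language.Structure.RelMap R (fun i => f (b i))) ↔
    (∀ φ : HornSentence L, φ.Restricted S → φ.Realize A → φ.Realize B) := by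
  constructor
  · rintro ⟨⟨f₀⟩, hS⟩ ⟨n, premises, head⟩ hφ
    refine HornSentence.realize_of_exists_hom fun w hw => ?_
    match head, hφ with
    | none, _ => exact ⟨f₀, id⟩
    | some (.eq _ _), hφ => exact hφ.elim
    | some (.rel R _), hR => exact hS _ R hR _ hw
  · intro H
    have : L.IsRelational := hfun
    let e := Finite.equivFin B
    refine ⟨?_, fun m R hR b hb => ?_⟩
    · obtain ⟨f, -⟩ := HornSentence.exists_hom_of_not_realize_diagramSentence e none fun hA =>
        HornSentence.not_realize_diagramSentence_self e none id (H _ trivial hA)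
      exact ⟨f⟩
    · let head : Option (HornAtomic L _) := some (.rel R (e ∘ b))
      have hbB : ¬ (HornSentence.diagramSentence e head).RealizeHead e.symm := by
        show ¬ Language.Structure.RelMap R fun i => e.symm (e (b i))
        simpa using hb
      obtain ⟨f, hf⟩ := HornSentence.exists_hom_of_not_realize_diagramSentence e head fun hA =>
        HornSentence.not_realize_diagramSentence_self e head hbB (H _ hR hA)
      refine ⟨f, fun hfb => hf ?_⟩
      show Language.Structure.RelMap R fun i => f (e.symm (e (b i)))
      simpa using hfb
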